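/- For ρ > 0, the constant C₀ := (1/2) log(2 − erfc(√2 ρ)) − (ρ/(3√(2π))) ∫₀¹ e^{−2ρ²x²} (5 + 3ρ²x − 2ρ²x²) / (1 − (1/2) erfc(√2 ρ x)) dx is strictly negative. -/
import Mathlib


open Real MeasureTheory intervalIntegral

/-- The real complementary error function `erfc x = (2/√π) ∫_x^∞ e^(−t²) dt`. -/
noncomputable def rerfc (x : ℝ) : ℝ :=
  (2 / Real.sqrt Real.pi) * ∫ t in Set.Ioi x, Real.exp (-t^2)

set_option maxHeartbeats 1000000 in
/-- The constant `C₀` is strictly negative for every `ρ > 0`. -/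
theorem C0_neg (ρ : ℝ) (hρ : 0 < ρ) :
    (1/2) * Real.log (2 - rerfc (Real.sqrt 2 * ρ))
      - ρ/(3*Real.sqrt (2*Real.pi)) *
          ∫ x in (0:ℝ)..1, Real.exp (-2*ρ^2*x^2) * (5 + 3*ρ^2*x - 2*ρ^2*x^2) /
            (1 - (1/2) * rerfc (Real.sqrt 2 * ρ * x))
      < 0 := by
  have hπ : (0:ℝ) < Real.pi := Real.pi_pos
  have hsπ : (0:ℝ) < Real.sqrt Real.pi := Real.sqrt_pos.2 hπ
  have hs2 : (0:ℝ) < Real.sqrt 2 := by positivity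
  have hs2π : (0:ℝ) < Real.sqrt (2*Real.pi) := Real.sqrt_pos.2 (by positivity)
  have h2π : Real.sqrt (2*Real.pi) = Real.sqrt 2 * Real.sqrt Real.pi :=
    Real.sqrt_mul (by norm_num) _
  have h22 : Real.sqrt 2 * Real.sqrt 2 = 2 := Real.mul_self_sqrt (by norm_num)
  set E : ℝ → ℝ := fun s => ∫ t in (0:ℝ)..s, Real.exp (-t^2) with hEdef
  have hcont : Continuous fun t : ℝ => Real.exp (-t^2) := by continuity
  have hEderiv : ∀ s, HasDerivAt E (Real.exp (-s^2)) s := fun s =>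
    (hcont.integral_hasStrictDerivAt 0 s).hasDerivAt
  have hEcont : Continuous E := continuous_iff_continuousAt.2 fun s =>
    (hEderiv s).continuousAt
  have hint : Integrable fun t : ℝ => Real.exp (-t^2) := by
    have := integrable_exp_neg_mul_sq (b := 1) one_pos
    simpa using this
  have hIoi0 : ∫ t in Set.Ioi (0:ℝ), Real.exp (-t^2) = Real.sqrt Real.pi / 2 := by
    have := integral_gaussian_Ioi 1
    simpa using this
  -- rerfc in terms of E, for nonnegative arguments
  have hrerfc : ∀ s : ℝ, 0 ≤ s →
      rerfc s = 1 - (2 / Real.sqrt Real.pi) * E s := by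
    intro s hs
    have hsplit : (∫ t in Set.Ioc (0:ℝ) s, Real.exp (-t^2))
        + ∫ t in Set.Ioi s, Real.exp (-t^2)
        = ∫ t in Set.Ioi (0:ℝ), Real.exp (-t^2) := by
      rw [← MeasureTheory.setIntegral_union (Set.Ioc_disjoint_Ioi le_rfl)
        measurableSet_Ioi hint.integrableOn hint.integrableOn,
        Set.Ioc_union_Ioi_eq_Ioi hs]
    have hE : E s = ∫ t in Set.Ioc (0:ℝ) s, Real.exp (-t^2) :=
      intervalIntegral.integral_of_le hs
    have : (∫ t in Set.Ioi s, Real.exp (-t^2)) = Real.sqrt Real.pi / 2 - E s := by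
      rw [hE]; linarith [hsplit, hIoi0]
    rw [rerfc, this]
    field_simp
  have hEnonneg : ∀ s : ℝ, 0 ≤ s → 0 ≤ E s := fun s hs =>
    intervalIntegral.integral_nonneg hs fun t _ => (Real.exp_pos _).le
  have hEle : ∀ s : ℝ, 0 ≤ s → E s ≤ Real.sqrt Real.pi / 2 := by
    intro s hs
    rw [hEdef]
    simp only
    rw [intervalIntegral.integral_of_le hs, ← hIoi0]
    refine MeasureTheory.setIntegral_mono_set hint.integrableOn ?_ ?_
    · filter_upwards with t using (Real.exp_pos _).le
    · exact Filter.Eventually.of_forall (fun t ht => Set.Ioc_subset_Ioi_self ht)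
  -- the function A
  set A : ℝ → ℝ := fun x => 1 + (2 / Real.sqrt Real.pi) * E (Real.sqrt 2 * ρ * x)
    with hAdef
  have hApos : ∀ x : ℝ, 0 ≤ x → 0 < A x := by
    intro x hx
    have h1 : 0 ≤ Real.sqrt 2 * ρ * x := by positivity
    have := hEnonneg _ h1
    have : 0 ≤ (2 / Real.sqrt Real.pi) * E (Real.sqrt 2 * ρ * x) := by positivity
    simp only [hAdef]; linarith
  have hAle : ∀ x : ℝ, 0 ≤ x → A x ≤ 2 := by
    intro x hx
    have h1 : 0 ≤ Real.sqrt 2 * ρ * x := by positivity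
    have h2 := hEle _ h1
    have h3 : (2 / Real.sqrt Real.pi) * E (Real.sqrt 2 * ρ * x)
        ≤ (2 / Real.sqrt Real.pi) * (Real.sqrt Real.pi / 2) :=
      mul_le_mul_of_nonneg_left h2 (by positivity)
    have h4 : (2 / Real.sqrt Real.pi) * (Real.sqrt Real.pi / 2) = 1 := by
      field_simp
    simp only [hAdef]; linarith
  have hAcont : Continuous A := by
    apply continuous_const.add
    exact continuous_const.mul (hEcont.comp (by continuity))
  -- derivative of A
  have hAderiv : ∀ x : ℝ, HasDerivAt A
      ((2 / Real.sqrt Real.pi) * (Real.exp (-2*ρ^2*x^2) * (Real.sqrt 2 * ρ))) x := by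
    intro x
    have hlin : HasDerivAt (fun x : ℝ => Real.sqrt 2 * ρ * x) (Real.sqrt 2 * ρ) x := by
      simpa using (hasDerivAt_id x).const_mul (Real.sqrt 2 * ρ)
    have hcomp := (hEderiv (Real.sqrt 2 * ρ * x)).comp x hlin
    have hsq : -(Real.sqrt 2 * ρ * x)^2 = -2*ρ^2*x^2 := by
      rw [mul_pow, mul_pow, Real.sq_sqrt (by norm_num : (0:ℝ) ≤ 2)]; ring
    rw [hsq] at hcomp
    exact (hcomp.const_mul (2 / Real.sqrt Real.pi)).const_add 1
  -- F and its derivative P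
  set F : ℝ → ℝ := fun x => (1/2) * Real.log (A x) with hFdef
  set P : ℝ → ℝ := fun x => (1/2) *
    (((2 / Real.sqrt Real.pi) * (Real.exp (-2*ρ^2*x^2) * (Real.sqrt 2 * ρ))) / A x)
    with hPdef
  have hFderiv : ∀ x ∈ Set.uIcc (0:ℝ) 1, HasDerivAt F (P x) x := by
    intro x hx
    rw [Set.uIcc_of_le (by norm_num : (0:ℝ) ≤ 1)] at hx
    have hx0 : 0 ≤ x := hx.1
    exact ((hAderiv x).log (hApos x hx0).ne').const_mul (1/2)
  have hPcontOn : ContinuousOn P (Set.uIcc (0:ℝ) 1) := by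
    rw [Set.uIcc_of_le (by norm_num : (0:ℝ) ≤ 1)]
    apply ContinuousOn.mul continuousOn_const
    apply ContinuousOn.div (by fun_prop) hAcont.continuousOn
    intro x hx; exact (hApos x hx.1).ne'
  have hPint : IntervalIntegrable P volume 0 1 :=
    hPcontOn.intervalIntegrable
  have hFTC : ∫ x in (0:ℝ)..1, P x = F 1 - F 0 :=
    intervalIntegral.integral_eq_sub_of_hasDerivAt hFderiv hPint
  -- F 0 = 0
  have hE0 : E 0 = 0 := by simp [hEdef]
  have hF0 : F 0 = 0 := by
    simp [hFdef, hAdef, hE0]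
  -- F 1 is the log term
  have hF1 : F 1 = (1/2) * Real.log (2 - rerfc (Real.sqrt 2 * ρ)) := by
    have : rerfc (Real.sqrt 2 * ρ) = 1 - (2 / Real.sqrt Real.pi) * E (Real.sqrt 2 * ρ) :=
      hrerfc _ (by positivity)
    rw [hFdef]
    simp only [hAdef]
    rw [this]
    have : (2 - (1 - 2 / Real.sqrt Real.pi * E (Real.sqrt 2 * ρ)))
        = 1 + 2 / Real.sqrt Real.pi * E (Real.sqrt 2 * ρ) := by ring
    rw [this, mul_one]
  -- the integrand h'
  set h' : ℝ → ℝ := fun x => Real.exp (-2*ρ^2*x^2) * (5 + 3*ρ^2*x - 2*ρ^2*x^2) / (A x / 2)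
    with hh'def
  have hcongr : (∫ x in (0:ℝ)..1, Real.exp (-2*ρ^2*x^2) * (5 + 3*ρ^2*x - 2*ρ^2*x^2) /
      (1 - (1/2) * rerfc (Real.sqrt 2 * ρ * x))) = ∫ x in (0:ℝ)..1, h' x := by
    apply intervalIntegral.integral_congr
    intro x hx
    rw [Set.uIcc_of_le (by norm_num : (0:ℝ) ≤ 1)] at hx
    have hx0 : 0 ≤ x := hx.1
    have : rerfc (Real.sqrt 2 * ρ * x)
        = 1 - (2 / Real.sqrt Real.pi) * E (Real.sqrt 2 * ρ * x) :=
      hrerfc _ (by positivity)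
    simp only [hh'def, hAdef]
    rw [this]
    ring_nf
  have hh'contOn : ContinuousOn h' (Set.uIcc (0:ℝ) 1) := by
    rw [Set.uIcc_of_le (by norm_num : (0:ℝ) ≤ 1)]
    apply ContinuousOn.div (by fun_prop) (by fun_prop)
    intro x hx
    have := hApos x hx.1
    positivity
  have hh'int : IntervalIntegrable h' volume 0 1 :=
    hh'contOn.intervalIntegrable
  set c : ℝ := ρ/(3*Real.sqrt (2*Real.pi)) with hcdef
  have hcpos : 0 < c := by rw [hcdef]; positivity
  -- pointwise key identity and bound
  set ε : ℝ := 2 * c * Real.exp (-2*ρ^2) with hεdef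
  have hεpos : 0 < ε := by rw [hεdef]; positivity
  have hkey : ∀ x ∈ Set.Icc (0:ℝ) 1, P x - c * h' x ≤ -ε := by
    intro x hx
    have hx0 : 0 ≤ x := hx.1
    have hx1 : x ≤ 1 := hx.2
    have hA1 : 0 < A x := hApos x hx0
    have hA2 : A x ≤ 2 := hAle x hx0
    have hPalt : P x = 6 * c * (Real.exp (-2*ρ^2*x^2) / A x) := by
      simp only [hPdef, hcdef]
      have hscal : (1/2 : ℝ) * ((2 / Real.sqrt Real.pi) *
            (Real.exp (-2*ρ^2*x^2) * (Real.sqrt 2 * ρ)))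
          = 6 * (ρ/(3*Real.sqrt (2*Real.pi))) * Real.exp (-2*ρ^2*x^2) := by
        rw [h2π]
        field_simp
        ring_nf
        rw [Real.sq_sqrt (by norm_num : (0:ℝ) ≤ 2)]
        ring
      calc (1/2 : ℝ) * ((2 / Real.sqrt Real.pi) *
              (Real.exp (-2*ρ^2*x^2) * (Real.sqrt 2 * ρ)) / A x)
          = ((1/2 : ℝ) * ((2 / Real.sqrt Real.pi) *
              (Real.exp (-2*ρ^2*x^2) * (Real.sqrt 2 * ρ)))) / A x := by ring
        _ = (6 * (ρ/(3*Real.sqrt (2*Real.pi))) * Real.exp (-2*ρ^2*x^2)) / A x := by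
              rw [hscal]
        _ = 6 * (ρ/(3*Real.sqrt (2*Real.pi))) * (Real.exp (-2*ρ^2*x^2) / A x) := by
              ring
    have hh'alt : h' x = 2 * (Real.exp (-2*ρ^2*x^2) / A x) * (5 + 3*ρ^2*x - 2*ρ^2*x^2) := by
      simp only [hh'def]
      rw [div_div_eq_mul_div]
      ring
    have heq : P x - c * h' x
        = (2 * c * (Real.exp (-2*ρ^2*x^2) / A x)) * (2*ρ^2*x^2 - 3*ρ^2*x - 2) := by
      rw [hPalt, hh'alt]
      ring
    rw [heq]
    have hq : 2*ρ^2*x^2 - 3*ρ^2*x - 2 ≤ -2 := by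
      nlinarith [mul_nonneg (mul_nonneg (sq_nonneg ρ) hx0)
        (show (0:ℝ) ≤ 3 - 2*x by linarith)]
    have he1 : Real.exp (-2*ρ^2) ≤ Real.exp (-2*ρ^2*x^2) := by
      apply Real.exp_le_exp.2
      have hx2 : x^2 ≤ 1 := by
        calc x^2 ≤ 1^2 := by apply pow_le_pow_left₀ hx0 hx1
          _ = 1 := one_pow 2
      have h9 : 2*ρ^2*x^2 ≤ 2*ρ^2 := by
        have := mul_le_mul_of_nonneg_left hx2 (show (0:ℝ) ≤ 2*ρ^2 by positivity)
        linarith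
      linarith
    have hfrac : Real.exp (-2*ρ^2) / 2 ≤ Real.exp (-2*ρ^2*x^2) / A x := by
      apply div_le_div₀ (Real.exp_pos _).le he1 hA1 hA2
    have h1 : (2 * c * (Real.exp (-2*ρ^2*x^2) / A x)) * (2*ρ^2*x^2 - 3*ρ^2*x - 2)
        ≤ (2 * c * (Real.exp (-2*ρ^2) / 2)) * (2*ρ^2*x^2 - 3*ρ^2*x - 2) := by
      apply mul_le_mul_of_nonpos_right _ (by linarith)
      have := mul_le_mul_of_nonneg_left hfrac (by positivity : (0:ℝ) ≤ 2*c)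
      linarith
    have h2 : (2 * c * (Real.exp (-2*ρ^2) / 2)) * (2*ρ^2*x^2 - 3*ρ^2*x - 2)
        ≤ (2 * c * (Real.exp (-2*ρ^2) / 2)) * (-2) := by
      apply mul_le_mul_of_nonneg_left hq (by positivity)
    have h3 : (2 * c * (Real.exp (-2*ρ^2) / 2)) * (-2) = -ε := by
      rw [hεdef]; ring
    linarith
  -- combine
  have hcomb : (1/2) * Real.log (2 - rerfc (Real.sqrt 2 * ρ))
      - c * ∫ x in (0:ℝ)..1, h' x = ∫ x in (0:ℝ)..1, (P x - c * h' x) := by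
    rw [intervalIntegral.integral_sub hPint (hh'int.const_mul c), hFTC, hF0, hF1,
      intervalIntegral.integral_const_mul]
    ring
  have hmono : (∫ x in (0:ℝ)..1, (P x - c * h' x)) ≤ ∫ x in (0:ℝ)..1, (-ε : ℝ) := by
    apply intervalIntegral.integral_mono_on (by norm_num)
      (hPint.sub (hh'int.const_mul c)) intervalIntegrable_const
    intro x hx
    exact hkey x hx
  have hconst : (∫ x in (0:ℝ)..1, (-ε : ℝ)) = -ε := by
    rw [intervalIntegral.integral_const]; norm_num
  rw [hcongr]
  calc (1/2) * Real.log (2 - rerfc (Real.sqrt 2 * ρ)) - c * ∫ x in (0:ℝ)..1, h' x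
      = ∫ x in (0:ℝ)..1, (P x - c * h' x) := hcomb
    _ ≤ -ε := by rw [← hconst]; exact hmono
    _ < 0 := by linarith
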